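/- (Proposition F) Let (G, r, n) be a known i.i.d. input, where G = (U,V,E) is a bipartite stochastic type graph, n ≥ 1 is the number of arrivals, and r = (r_v)_{v∈V} are arrival rates with r_v > 0 and Σ_{v∈V} r_v = n. Then LPOPT_new-iid(G, r, n) ≤ LPOPT_std-iid(G, r, n). -/
import Mathlib


open Finset

/-- A bipartite stochastic graph on offline vertices `U` and online vertices `V`,
with edge probabilities `p`, edge weights `w` and patience values `patience`. -/
structure StochasticGraph (U V : Type) [Fintype U] [Fintype V] [DecidableEq U] where
  p : U → V → ℝ
  w : U → V → ℝ
  patience : V → ℕ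
  p_nonneg : ∀ u v, 0 ≤ p u v
  p_le_one : ∀ u v, p u v ≤ 1
  w_nonneg : ∀ u v, 0 ≤ w u v
  patience_pos : ∀ v, 1 ≤ patience v

/-- `Tup U ℓ` encodes `U^{(≤ℓ)}`, the tuples of pairwise-distinct elements of `U`
of length between `1` and `ℓ`: a tuple of length `j+1` (for `j < ℓ`) is an injection
`Fin (j+1) ↪ U`. -/
abbrev Tup (U : Type) (ℓ : ℕ) := Σ j : Fin ℓ, (Fin (j.1 + 1) ↪ U)

variable {U V : Type} [Fintype U] [Fintype V] [DecidableEq U] [DecidableEq V]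

/-- `g_v^i(u) = p_{u_i,v} · ∏_{j<i} (1 − p_{u_j,v})`: the probability that `(u_i,v)` is
the first active edge when the edges of the tuple `u` are probed in order. -/
noncomputable def gval (G : StochasticGraph U V) (v : V) {ℓ : ℕ} (u : Tup U ℓ)
    (i : Fin (u.1.1 + 1)) : ℝ :=
  G.p (u.2 i) v * ∏ j ∈ Finset.univ.filter (fun j => j < i), (1 - G.p (u.2 j) v)

/-- Contribution `Σ_i w_{u_i,v}·g_v^i(u)` of the tuple `u` at online vertex `v` to the
LP-new objective. -/
noncomputable def objTerm (G : StochasticGraph U V) (v : V)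
    (u : Tup U (G.patience v)) : ℝ :=
  ∑ i, G.w (u.2 i) v * gval G v u i

/-- Feasibility for LP-new: nonnegativity, the per-online-vertex distribution
constraint, and the per-offline-vertex matching constraint. -/
def FeasNew (G : StochasticGraph U V) (x : ∀ v : V, Tup U (G.patience v) → ℝ) : Prop :=
  (∀ v u, 0 ≤ x v u) ∧
  (∀ v, ∑ u, x v u ≤ 1) ∧
  (∀ u0 : U, ∑ v, ∑ u : Tup U (G.patience v), ∑ i,
      (if u.2 i = u0 then gval G v u i * x v u else 0) ≤ 1)

/-- The LP-new objective. -/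
noncomputable def objNew (G : StochasticGraph U V)
    (x : ∀ v : V, Tup U (G.patience v) → ℝ) : ℝ :=
  ∑ v, ∑ u, objTerm G v u * x v u

/-- `LPOPT_new(G)`: the optimum value of LP-new. -/
noncomputable def LPOPTnew (G : StochasticGraph U V) : ℝ :=
  sSup {r | ∃ x, FeasNew G x ∧ objNew G x = r}

/-- The induced stochastic graph `G[S]` obtained by restricting the online vertices
to `S ⊆ V`. -/
def StochasticGraph.restrict (G : StochasticGraph U V) (S : Finset V) :
    StochasticGraph U {v : V // v ∈ S} where
  p := fun u v => G.p u v.1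
  w := fun u v => G.w u v.1
  patience := fun v => G.patience v.1
  p_nonneg := fun u v => G.p_nonneg u v.1
  p_le_one := fun u v => G.p_le_one u v.1
  w_nonneg := fun u v => G.w_nonneg u v.1
  patience_pos := fun v => G.patience_pos v.1

/-- Feasibility for LP-new-iid with arrival rates `r`. -/
def FeasNewIID (G : StochasticGraph U V) (r : V → ℝ)
    (y : ∀ v : V, Tup U (G.patience v) → ℝ) : Prop :=
  (∀ v u, 0 ≤ y v u) ∧
  (∀ v, ∑ u, y v u ≤ r v) ∧
  (∀ u0 : U, ∑ v, ∑ u : Tup U (G.patience v), ∑ i,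
      (if u.2 i = u0 then gval G v u i * y v u else 0) ≤ 1)

/-- `LPOPT_new-iid(G,r,n)`: the optimum value of LP-new-iid. -/
noncomputable def LPOPTnewIID (G : StochasticGraph U V) (r : V → ℝ) : ℝ :=
  sSup {c | ∃ y, FeasNewIID G r y ∧ objNew G y = c}

/-- Feasibility for LP-std-iid with arrival rates `r`. -/
def FeasStdIID (G : StochasticGraph U V) (r : V → ℝ) (y : U → V → ℝ) : Prop :=
  (∀ u v, 0 ≤ y u v) ∧ (∀ u v, y u v ≤ r v) ∧
  (∀ u, ∑ v, G.p u v * y u v ≤ 1) ∧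
  (∀ v, ∑ u, G.p u v * y u v ≤ r v) ∧
  (∀ v, ∑ u, y u v ≤ r v * (G.patience v : ℝ))

/-- `LPOPT_std-iid(G,r,n)`: the optimum value of LP-std-iid. -/
noncomputable def LPOPTstdIID (G : StochasticGraph U V) (r : V → ℝ) : ℝ :=
  sSup {c | ∃ y, FeasStdIID G r y ∧ (∑ u, ∑ v, G.w u v * G.p u v * y u v) = c}

open Finset
set_option linter.unusedSectionVars false

lemma telescoping_sum_le_one (m : ℕ) (q : Fin m → ℝ)
    (h0 : ∀ j, 0 ≤ q j) (h1 : ∀ j, q j ≤ 1) :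
    ∑ i, q i * ∏ j ∈ Finset.univ.filter (fun j => j < i), (1 - q j) ≤ 1 := by
  let F : ℕ → ℝ := fun k => ∏ j ∈ Finset.univ.filter (fun j : Fin m => (j : ℕ) < k), (1 - q j)
  have hstep : ∀ i : Fin m,
      q i * ∏ j ∈ Finset.univ.filter (fun j => j < i), (1 - q j) = F i - F (i + 1) := by
    intro i
    have h1' : (Finset.univ.filter (fun j : Fin m => (j : ℕ) < (i : ℕ) + 1)) =
        insert i (Finset.univ.filter (fun j : Fin m => (j : ℕ) < (i : ℕ))) := by
      ext j
      simp only [Finset.mem_filter, Finset.mem_insert, Finset.mem_univ, true_and]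
      constructor
      · intro h
        rcases Nat.lt_succ_iff_lt_or_eq.mp h with h | h
        · exact Or.inr h
        · exact Or.inl (Fin.ext h)
      · rintro (h | h)
        · subst h; exact Nat.lt_succ_self _
        · exact Nat.lt_succ_of_lt h
    have hnotmem : i ∉ Finset.univ.filter (fun j : Fin m => (j : ℕ) < (i : ℕ)) := by
      simp
    have hF1 : F ((i : ℕ) + 1) = (1 - q i) * F i := by
      show (∏ j ∈ Finset.univ.filter (fun j : Fin m => (j : ℕ) < (i : ℕ) + 1), (1 - q j)) = _
      rw [h1', Finset.prod_insert hnotmem]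
    have hPv : (∏ j ∈ Finset.univ.filter (fun j => j < i), (1 - q j)) = F i := rfl
    rw [hPv, hF1]; ring
  have hcalc : ∑ i : Fin m, (F i - F ((i : ℕ) + 1)) = F 0 - F m := by
    rw [Fin.sum_univ_eq_sum_range (fun k => F k - F (k + 1)) m]
    exact Finset.sum_range_sub' F m
  have hF0 : F 0 = 1 := by
    show (∏ j ∈ Finset.univ.filter (fun j : Fin m => (j : ℕ) < 0), (1 - q j)) = 1
    simp
  have hFm : 0 ≤ F m := Finset.prod_nonneg fun j _ => by have := h1 j; linarith
  calc ∑ i, q i * ∏ j ∈ Finset.univ.filter (fun j => j < i), (1 - q j)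
      = ∑ i : Fin m, (F i - F ((i : ℕ) + 1)) := Finset.sum_congr rfl fun i _ => hstep i
    _ = F 0 - F m := hcalc
    _ ≤ 1 := by rw [hF0]; linarith

section
variable {U V : Type} [Fintype U] [Fintype V] [DecidableEq U] [DecidableEq V]

/-- The partial product `∏_{j<i}(1-p_{u_j,v})`. -/
noncomputable def Pv (G : StochasticGraph U V) (v : V) {ℓ : ℕ} (u : Tup U ℓ)
    (i : Fin (u.1.1 + 1)) : ℝ :=
  ∏ j ∈ Finset.univ.filter (fun j => j < i), (1 - G.p (u.2 j) v)

lemma Pv_nonneg (G : StochasticGraph U V) (v : V) {ℓ : ℕ} (u : Tup U ℓ)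
    (i : Fin (u.1.1 + 1)) : 0 ≤ Pv G v u i :=
  Finset.prod_nonneg fun j _ => by have := G.p_le_one (u.2 j) v; linarith

lemma Pv_le_one (G : StochasticGraph U V) (v : V) {ℓ : ℕ} (u : Tup U ℓ)
    (i : Fin (u.1.1 + 1)) : Pv G v u i ≤ 1 :=
  Finset.prod_le_one (fun j _ => by have := G.p_le_one (u.2 j) v; linarith)
    (fun j _ => by have := G.p_nonneg (u.2 j) v; linarith)

lemma gval_eq (G : StochasticGraph U V) (v : V) {ℓ : ℕ} (u : Tup U ℓ)
    (i : Fin (u.1.1 + 1)) : gval G v u i = G.p (u.2 i) v * Pv G v u i := rfl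

lemma sum_gval_le_one (G : StochasticGraph U V) (v : V) {ℓ : ℕ} (u : Tup U ℓ) :
    ∑ i, gval G v u i ≤ 1 :=
  telescoping_sum_le_one (u.1.1 + 1) (fun i => G.p (u.2 i) v)
    (fun j => G.p_nonneg _ _) (fun j => G.p_le_one _ _)

end

/-- Proposition F: for any known i.i.d. input `(G, r, n)` (arrival rates `r_v > 0`
summing to the number of arrivals `n ≥ 1`),
`LPOPT_new-iid(G,r,n) ≤ LPOPT_std-iid(G,r,n)`. -/
theorem LPOPTnewIID_le_LPOPTstdIID (G : StochasticGraph U V)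
    (n : ℕ) (hn : 1 ≤ n) (r : V → ℝ) (hr : ∀ v, 0 < r v)
    (hrsum : ∑ v, r v = (n : ℝ)) :
    LPOPTnewIID G r ≤ LPOPTstdIID G r := by
  classical
  have hA0 : (0 : ℝ) ∈ {c | ∃ y, FeasNewIID G r y ∧ objNew G y = c} := by
    refine ⟨fun _ _ => 0, ⟨fun v u => le_refl 0, fun v => by simpa using (hr v).le,
      fun u0 => ?_⟩, by simp [objNew]⟩
    simp
  have hBbdd : BddAbove {c | ∃ y, FeasStdIID G r y ∧
      (∑ u, ∑ v, G.w u v * G.p u v * y u v) = c} := by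
    refine ⟨∑ u, ∑ v, G.w u v * r v, ?_⟩
    rintro c ⟨z, ⟨hz0, hzr, _, _, _⟩, rfl⟩
    refine Finset.sum_le_sum fun u _ => Finset.sum_le_sum fun v _ => ?_
    have h1 : G.p u v * z u v ≤ r v := by
      calc G.p u v * z u v ≤ 1 * z u v :=
            mul_le_mul_of_nonneg_right (G.p_le_one u v) (hz0 u v)
        _ = z u v := one_mul _
        _ ≤ r v := hzr u v
    calc G.w u v * G.p u v * z u v = G.w u v * (G.p u v * z u v) := by ring
      _ ≤ G.w u v * r v := mul_le_mul_of_nonneg_left h1 (G.w_nonneg u v)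
  refine csSup_le ⟨0, hA0⟩ ?_
  rintro c ⟨y, ⟨hy0, hy1, hy2⟩, rfl⟩
  refine le_csSup hBbdd ?_
  -- construct the std solution
  set z : U → V → ℝ := fun u0 v => ∑ u : Tup U (G.patience v), ∑ i,
    (if u.2 i = u0 then Pv G v u i * y v u else 0) with hz
  have hterm_nonneg : ∀ (v : V) (u : Tup U (G.patience v)) (i) (u0 : U),
      0 ≤ (if u.2 i = u0 then Pv G v u i * y v u else 0) := by
    intro v u i u0
    split
    · exact mul_nonneg (Pv_nonneg G v u i) (hy0 v u)
    · exact le_refl 0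
  have hz0 : ∀ u0 v, 0 ≤ z u0 v := fun u0 v =>
    Finset.sum_nonneg fun u _ => Finset.sum_nonneg fun i _ => hterm_nonneg v u i u0
  -- per tuple bound: at most one index hits u0, and Pv ≤ 1
  have htup : ∀ (v : V) (u : Tup U (G.patience v)) (u0 : U),
      ∑ i, (if u.2 i = u0 then Pv G v u i * y v u else 0) ≤ y v u := by
    intro v u u0
    have hcard : (Finset.univ.filter (fun i => u.2 i = u0)).card ≤ 1 :=
      Finset.card_le_one.mpr (by
        intro i hi j hj
        simp only [Finset.mem_filter] at hi hj
        exact u.2.injective (hi.2.trans hj.2.symm))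
    calc ∑ i, (if u.2 i = u0 then Pv G v u i * y v u else 0)
        = ∑ i ∈ Finset.univ.filter (fun i => u.2 i = u0), Pv G v u i * y v u :=
          (Finset.sum_filter _ _).symm
      _ ≤ ∑ i ∈ Finset.univ.filter (fun i => u.2 i = u0), y v u :=
          Finset.sum_le_sum fun i _ => by
            calc Pv G v u i * y v u ≤ 1 * y v u :=
                  mul_le_mul_of_nonneg_right (Pv_le_one G v u i) (hy0 v u)
              _ = y v u := one_mul _
      _ = (Finset.univ.filter (fun i => u.2 i = u0)).card • y v u :=
          (Finset.sum_const _)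
      _ ≤ 1 • y v u := by
          have := hy0 v u
          exact smul_le_smul_of_nonneg_right (by exact_mod_cast hcard) this
      _ = y v u := one_smul _ _
  have hzr : ∀ u0 v, z u0 v ≤ r v := by
    intro u0 v
    calc z u0 v ≤ ∑ u : Tup U (G.patience v), y v u :=
          Finset.sum_le_sum fun u _ => htup v u u0
      _ ≤ r v := hy1 v
  -- key identity: p u0 v * z u0 v is the LP-new constraint quantity
  have hpz : ∀ (u0 : U) (v : V), G.p u0 v * z u0 v =
      ∑ u : Tup U (G.patience v), ∑ i, (if u.2 i = u0 then gval G v u i * y v u else 0) := by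
    intro u0 v
    rw [hz, Finset.mul_sum]
    refine Finset.sum_congr rfl fun u _ => ?_
    rw [Finset.mul_sum]
    refine Finset.sum_congr rfl fun i _ => ?_
    split_ifs with h
    · rw [gval_eq, h]; ring
    · ring
  have h3 : ∀ u0 : U, ∑ v, G.p u0 v * z u0 v ≤ 1 := by
    intro u0
    calc ∑ v, G.p u0 v * z u0 v
        = ∑ v, ∑ u : Tup U (G.patience v), ∑ i,
            (if u.2 i = u0 then gval G v u i * y v u else 0) :=
          Finset.sum_congr rfl fun v _ => hpz u0 v
      _ ≤ 1 := hy2 u0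
  have h4 : ∀ v, ∑ u0, G.p u0 v * z u0 v ≤ r v := by
    intro v
    have : ∑ u0, G.p u0 v * z u0 v
        = ∑ u : Tup U (G.patience v), (∑ i, gval G v u i) * y v u := by
      rw [Finset.sum_congr rfl fun u0 _ => hpz u0 v, Finset.sum_comm]
      refine Finset.sum_congr rfl fun u _ => ?_
      rw [Finset.sum_comm, Finset.sum_mul]
      refine Finset.sum_congr rfl fun i _ => ?_
      rw [Finset.sum_ite_eq]
      simp
    rw [this]
    calc ∑ u : Tup U (G.patience v), (∑ i, gval G v u i) * y v u
        ≤ ∑ u : Tup U (G.patience v), 1 * y v u :=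
          Finset.sum_le_sum fun u _ =>
            mul_le_mul_of_nonneg_right (sum_gval_le_one G v u) (hy0 v u)
      _ = ∑ u : Tup U (G.patience v), y v u := by simp
      _ ≤ r v := hy1 v
  have h5 : ∀ v, ∑ u0, z u0 v ≤ r v * (G.patience v : ℝ) := by
    intro v
    have heq : ∑ u0, z u0 v
        = ∑ u : Tup U (G.patience v), (∑ i, Pv G v u i) * y v u := by
      rw [hz]
      rw [Finset.sum_comm]
      refine Finset.sum_congr rfl fun u _ => ?_
      rw [Finset.sum_comm, Finset.sum_mul]
      refine Finset.sum_congr rfl fun i _ => ?_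
      rw [Finset.sum_ite_eq]
      simp
    rw [heq]
    have hlen : ∀ u : Tup U (G.patience v),
        (∑ i, Pv G v u i) ≤ (G.patience v : ℝ) := by
      intro u
      calc ∑ i, Pv G v u i ≤ ∑ _i : Fin (u.1.1 + 1), (1 : ℝ) :=
            Finset.sum_le_sum fun i _ => Pv_le_one G v u i
        _ = ((u.1.1 + 1 : ℕ) : ℝ) := by simp
        _ ≤ (G.patience v : ℝ) := by exact_mod_cast Nat.succ_le_of_lt u.1.2
    calc ∑ u : Tup U (G.patience v), (∑ i, Pv G v u i) * y v u
        ≤ ∑ u : Tup U (G.patience v), (G.patience v : ℝ) * y v u :=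
          Finset.sum_le_sum fun u _ =>
            mul_le_mul_of_nonneg_right (hlen u) (hy0 v u)
      _ = (G.patience v : ℝ) * ∑ u : Tup U (G.patience v), y v u := by
          rw [Finset.mul_sum]
      _ ≤ (G.patience v : ℝ) * r v := by
          refine mul_le_mul_of_nonneg_left (hy1 v) ?_
          exact Nat.cast_nonneg _
      _ = r v * (G.patience v : ℝ) := mul_comm _ _
  refine ⟨z, ⟨hz0, hzr, h3, h4, h5⟩, ?_⟩
  -- objective equality
  have hobj : ∀ (u0 : U) (v : V), G.w u0 v * G.p u0 v * z u0 v =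
      ∑ u : Tup U (G.patience v), ∑ i,
        (if u.2 i = u0 then G.w (u.2 i) v * gval G v u i * y v u else 0) := by
    intro u0 v
    rw [hz, Finset.mul_sum]
    refine Finset.sum_congr rfl fun u _ => ?_
    rw [Finset.mul_sum]
    refine Finset.sum_congr rfl fun i _ => ?_
    split_ifs with h
    · rw [gval_eq, h]; ring
    · ring
  calc ∑ u0, ∑ v, G.w u0 v * G.p u0 v * z u0 v
      = ∑ v, ∑ u0, G.w u0 v * G.p u0 v * z u0 v := Finset.sum_comm
    _ = ∑ v, ∑ u : Tup U (G.patience v), objTerm G v u * y v u := by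
        refine Finset.sum_congr rfl fun v _ => ?_
        rw [Finset.sum_congr rfl fun u0 _ => hobj u0 v, Finset.sum_comm]
        refine Finset.sum_congr rfl fun u _ => ?_
        rw [objTerm, Finset.sum_mul, Finset.sum_comm]
        refine Finset.sum_congr rfl fun i _ => ?_
        rw [Finset.sum_ite_eq]
        simp
    _ = objNew G y := rfl
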